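/- There is an absolute constant C > 0 such that for all integers n and m with 1 ≤ m ≤ n, and every z ∈ [x₂, 1], ((n−m)!/(n+m)!) · ∫_z^1 P_n^m(x)² dx ≤ C · √(1 − z) / n. -/

import Mathlib

open scoped Real

/-- The Legendre polynomial `P_n(x) = (1/(2^n n!)) (d/dx)^n (x² − 1)^n`. -/
noncomputable def legendreP (n : ℕ) (x : ℝ) : ℝ :=
  (1 / (2 ^ n * (n.factorial : ℝ))) * iteratedDeriv n (fun t : ℝ => (t ^ 2 - 1) ^ n) x

/-- The associated Legendre function
`P_n^m(x) = (1 − x²)^{m/2} (d/dx)^m P_n(x)`. -/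
noncomputable def assocLegendreP (n m : ℕ) (x : ℝ) : ℝ :=
  (1 - x ^ 2) ^ ((m : ℝ) / 2) * iteratedDeriv m (legendreP n) x

/-- The `L²(S²)`-normalized associated Legendre function
`f_{n,m}(x) = √((n−m)!/(n+m)!) P_n^m(x)`. -/
noncomputable def fLeg (n m : ℕ) (x : ℝ) : ℝ :=
  Real.sqrt (((n - m).factorial : ℝ) / ((n + m).factorial : ℝ)) * assocLegendreP n m x

/-- `x₀ = √(1 − m²/(n(n+1)))`. -/
noncomputable def xZero (n m : ℕ) : ℝ :=
  Real.sqrt (1 - (m : ℝ) ^ 2 / ((n : ℝ) * ((n : ℝ) + 1)))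

/-- `x₂ = √(1 − m²/(3n(n+1)))`. -/
noncomputable def xTwo (n m : ℕ) : ℝ :=
  Real.sqrt (1 - (m : ℝ) ^ 2 / (3 * (n : ℝ) * ((n : ℝ) + 1)))

/-- `t = √(x₀² + (m+1)/(n(n+1)))`. -/
noncomputable def tPoint (n m : ℕ) : ℝ :=
  Real.sqrt ((xZero n m) ^ 2 + ((m : ℝ) + 1) / ((n : ℝ) * ((n : ℝ) + 1)))

/-! Write `(x² − 1)ⁿ = (x − 1)ⁿ (x + 1)ⁿ` and expand `D^{n+m}` by Leibniz: only the terms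
`(x − 1)^r (x + 1)^{n−m−r}` with `0 ≤ r ≤ n − m` survive, and when `1 − x ≤ δ` they are
dominated by the exponential series, giving
`|D^{n+m}(x² − 1)ⁿ| ≤ (n+m)! n! 2^{n−m}/(m! (n−m)!) · e^y` with `y = n(n+1)δ/(2m)`.
Hence on `[1 − δ, 1]` the normalized `P_n^m(x)²` is at most `K(δ) (1 − x)^m`, and the tail
integral from `z = 1 − δ` is at most `K(δ) δ^{m+1}/(m+1)`.

For `z ≥ x₂` we have `x₂ ≥ 4/5`, so `n(n+1)δ ≤ 5m²/27`. Then `(n+m)! ≤ (n−m)! (n(n+1))^m`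
and `m^m ≤ m! e^m` give `K(δ) δ^m ≤ 1`, and `δ/(m+1) ≤ √δ/n`; so `C = 1` works. -/

open Polynomial Finset
open scoped Nat

theorem iteratedDeriv_polynomial_eval {𝕜 : Type*} [NontriviallyNormedField 𝕜] (p : 𝕜[X])
    (k : ℕ) :
    iteratedDeriv k (fun x => p.eval x) = fun x => (derivative^[k] p).eval x := by
  induction k with
  | zero => simp
  | succ k ih =>
    rw [iteratedDeriv_succ, ih, Function.iterate_succ_apply']
    funext x
    exact Polynomial.deriv _

theorem legendreP_eq_eval (n : ℕ) :
    legendreP n =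
      fun x => (C (1 / (2 ^ n * n ! : ℝ)) * derivative^[n] ((X ^ 2 - 1) ^ n)).eval x := by
  have h : (fun t : ℝ => (t ^ 2 - 1) ^ n) = fun t => ((X ^ 2 - 1) ^ n : ℝ[X]).eval t := by
    funext t
    simp
  funext x
  rw [legendreP, h, iteratedDeriv_polynomial_eval, eval_mul, eval_C]

theorem iteratedDeriv_legendreP (n m : ℕ) (x : ℝ) :
    iteratedDeriv m (legendreP n) x =
      (derivative^[n + m] ((X ^ 2 - 1) ^ n : ℝ[X])).eval x / (2 ^ n * n !) := by
  rw [legendreP_eq_eval, iteratedDeriv_polynomial_eval, iterate_derivative_C_mul, add_comm,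
    Function.iterate_add_apply]
  simp only [eval_mul, eval_C]
  ring

theorem continuous_assocLegendreP (n m : ℕ) : Continuous (assocLegendreP n m) := by
  have h : iteratedDeriv m (legendreP n) = fun x =>
      (derivative^[n + m] ((X ^ 2 - 1) ^ n : ℝ[X])).eval x / (2 ^ n * n !) :=
    funext (iteratedDeriv_legendreP n m)
  unfold assocLegendreP
  rw [h]
  exact ((continuous_const.sub (continuous_pow 2)).rpow_const fun _ => Or.inr (by positivity)).mul
    ((Polynomial.continuous _).div_const _)

theorem factorial_add_le_factorial_sub_mul_pow {n m : ℕ} (hmn : m ≤ n) :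
    (n + m)! ≤ (n - m)! * (n * (n + 1)) ^ m := by
  induction m with
  | zero => simp
  | succ m ih =>
    have hstep : (n + m + 1) * (n - m) ≤ n * (n + 1) := by
      obtain ⟨d, rfl⟩ := Nat.exists_eq_add_of_le hmn
      rw [show m + 1 + d - m = d + 1 by omega]
      nlinarith
    calc (n + (m + 1))! = (n + m + 1) * (n + m)! := Nat.factorial_succ _
      _ ≤ (n + m + 1) * ((n - m)! * (n * (n + 1)) ^ m) := Nat.mul_le_mul_left _ (ih (by omega))
      _ = (n + m + 1) * (n - m) * ((n - (m + 1))! * (n * (n + 1)) ^ m) := by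
        rw [show n - m = n - (m + 1) + 1 by omega, Nat.factorial_succ]
        ring
      _ ≤ n * (n + 1) * ((n - (m + 1))! * (n * (n + 1)) ^ m) := Nat.mul_le_mul_right _ hstep
      _ = (n - (m + 1))! * (n * (n + 1)) ^ (m + 1) := by ring

theorem factorial_mul_factorial_mul_factorial_mul_pow_le {n m r : ℕ} (h : m + r ≤ n) :
    n ! * m ! * (n - m)! * m ^ r ≤ (m + r)! * (n - r)! * (n - m - r)! * (n * (n + 1)) ^ r := by
  have hn : n ! ≤ (n - r)! * n ^ r := by
    rw [← Nat.factorial_mul_descFactorial (show r ≤ n by omega)]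
    exact Nat.mul_le_mul_left _ (Nat.descFactorial_le_pow n r)
  have hnm : (n - m)! ≤ (n - m - r)! * (n + 1) ^ r := by
    rw [← Nat.factorial_mul_descFactorial (show r ≤ n - m by omega)]
    exact Nat.mul_le_mul_left _ ((Nat.descFactorial_le_pow _ r).trans
      (Nat.pow_le_pow_left (by omega) r))
  have hm : m ! * m ^ r ≤ (m + r)! := by
    rw [← Nat.factorial_mul_ascFactorial]
    exact Nat.mul_le_mul_left _ ((Nat.pow_le_pow_left (by omega) r).trans
      (Nat.pow_succ_le_ascFactorial _ r))
  calc n ! * m ! * (n - m)! * m ^ r = n ! * (n - m)! * (m ! * m ^ r) := by ring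
    _ ≤ ((n - r)! * n ^ r) * ((n - m - r)! * (n + 1) ^ r) * (m + r)! := by gcongr
    _ = (m + r)! * (n - r)! * (n - m - r)! * (n * (n + 1)) ^ r := by rw [mul_pow]; ring

theorem choose_mul_descFactorial_mul_descFactorial_le {n m r : ℕ} (h : m + r ≤ n) :
    (n + m).choose (m + r) * n.descFactorial (n - r) * n.descFactorial (m + r) *
        (m ^ r * m ! * (n - m)! * r !) ≤ (n + m)! * n ! * (n * (n + 1)) ^ r := by
  have hchoose : (n + m).choose (m + r) * (m + r)! * (n - r)! = (n + m)! := by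
    have := Nat.choose_mul_factorial_mul_factorial (show m + r ≤ n + m by omega)
    rwa [show n + m - (m + r) = n - r by omega] at this
  have hdesc₁ : r ! * n.descFactorial (n - r) = n ! := by
    have := Nat.factorial_mul_descFactorial (show n - r ≤ n by omega)
    rwa [show n - (n - r) = r by omega] at this
  have hdesc₂ : (n - m - r)! * n.descFactorial (m + r) = n ! := by
    have := Nat.factorial_mul_descFactorial h
    rwa [show n - (m + r) = n - m - r by omega] at this
  refine Nat.le_of_mul_le_mul_right ?_
    (show 0 < (m + r)! * (n - r)! * (n - m - r)! by positivity)
  calc (n + m).choose (m + r) * n.descFactorial (n - r) * n.descFactorial (m + r) *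
        (m ^ r * m ! * (n - m)! * r !) * ((m + r)! * (n - r)! * (n - m - r)!)
      = ((n + m).choose (m + r) * (m + r)! * (n - r)!) * (r ! * n.descFactorial (n - r)) *
          ((n - m - r)! * n.descFactorial (m + r)) * (m ^ r * m ! * (n - m)!) := by ring
    _ = (n + m)! * n ! * (n ! * m ! * (n - m)! * m ^ r) := by
      rw [hchoose, hdesc₁, hdesc₂]
      ring
    _ ≤ (n + m)! * n ! * ((m + r)! * (n - r)! * (n - m - r)! * (n * (n + 1)) ^ r) :=
      Nat.mul_le_mul_left _ (factorial_mul_factorial_mul_factorial_mul_pow_le h)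
    _ = (n + m)! * n ! * (n * (n + 1)) ^ r * ((m + r)! * (n - r)! * (n - m - r)!) := by ring

-- The coefficient is that of `(x - 1)^r (x + 1)^(n-m-r)` in `D^{n+m} ((x - 1)^n (x + 1)^n)`.
theorem leibniz_coeff_mul_le {n m r : ℕ} (hm : 0 < m) (h : m + r ≤ n) {δ : ℝ}
    (hδ : 0 ≤ δ) :
    ((n + m).choose (m + r) * n.descFactorial (n - r) * n.descFactorial (m + r) : ℝ) *
        (δ ^ r * 2 ^ (n - m - r)) ≤
      (n + m)! * n ! * 2 ^ (n - m) / (m ! * (n - m)!) *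
        ((n * (n + 1) * δ / (2 * m)) ^ r / r !) := by
  have hcoeff :
      ((n + m).choose (m + r) * n.descFactorial (n - r) * n.descFactorial (m + r) : ℝ) ≤
      (n + m)! * n ! * (n * (n + 1)) ^ r / (m ^ r * m ! * (n - m)! * r !) := by
    rw [le_div_iff₀ (by positivity)]
    exact_mod_cast choose_mul_descFactorial_mul_descFactorial_le h
  calc _ ≤ (n + m)! * n ! * (n * (n + 1)) ^ r / (m ^ r * m ! * (n - m)! * r !) *
        (δ ^ r * 2 ^ (n - m - r)) := by gcongr
    _ = _ := by
      rw [show n - m = n - m - r + r by omega, pow_add, Nat.add_sub_cancel]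
      field_simp
      rw [← mul_pow, ← mul_pow, ← mul_pow]
      field_simp

theorem abs_eval_leibniz_term_le {n m : ℕ} (hm : 0 < m) {x δ : ℝ} (hx : x ∈ Set.Icc (-1) 1)
    (hδ : 1 - x ≤ δ) (k : ℕ) :
    |((n + m).choose k • (derivative^[n + m - k] ((X + C (-1)) ^ n : ℝ[X]) *
        derivative^[k] ((X + C 1) ^ n))).eval x| ≤
      if m ≤ k then (n + m)! * n ! * 2 ^ (n - m) / (m ! * (n - m)!) *
        ((n * (n + 1) * δ / (2 * m)) ^ (k - m) / (k - m)!) else 0 := by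
  obtain ⟨hx₀, hx₁⟩ := hx
  have hδ₀ : 0 ≤ δ := by linarith
  simp only [iterate_derivative_X_add_pow, eval_mul, eval_pow, eval_add, eval_X,
    eval_C, nsmul_eq_mul, eval_natCast]
  split_ifs with hkm
  swap
  · rw [Nat.descFactorial_eq_zero_iff_lt.mpr (by omega)]
    simp
  rcases lt_or_ge n k with hkn | hkn
  · rw [Nat.descFactorial_eq_zero_iff_lt.mpr hkn]
    simp only [Nat.cast_zero, zero_mul, mul_zero, abs_zero]
    positivity
  obtain ⟨r, rfl⟩ := Nat.exists_eq_add_of_le hkm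
  rw [show n + m - (m + r) = n - r by omega, show n - (n - r) = r by omega,
    show n - (m + r) = n - m - r by omega, Nat.add_sub_cancel_left]
  calc _ = ((n + m).choose (m + r) * n.descFactorial (n - r) * n.descFactorial (m + r) : ℝ) *
        ((1 - x) ^ r * (x + 1) ^ (n - m - r)) := by
        rw [abs_mul, abs_mul, abs_mul, abs_mul, abs_pow, abs_pow,
          abs_of_nonpos (by linarith : x + -1 ≤ 0), abs_of_nonneg (by linarith : 0 ≤ x + 1)]
        simp only [Nat.abs_cast]
        ring
    _ ≤ ((n + m).choose (m + r) * n.descFactorial (n - r) * n.descFactorial (m + r) : ℝ) *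
        (δ ^ r * 2 ^ (n - m - r)) := by
        have hx1 : 0 ≤ x + 1 := by linarith
        gcongr
        linarith
    _ ≤ _ := leibniz_coeff_mul_le hm (by omega) hδ₀

theorem abs_eval_iterate_derivative_sq_sub_one_pow_le {n m : ℕ} (hm : 0 < m) {x δ : ℝ}
    (hx : x ∈ Set.Icc (-1) 1) (hδ : 1 - x ≤ δ) :
    |(derivative^[n + m] ((X ^ 2 - 1) ^ n : ℝ[X])).eval x| ≤
      (n + m)! * n ! * 2 ^ (n - m) / (m ! * (n - m)!) * Real.exp (n * (n + 1) * δ / (2 * m)) := by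
  set A : ℝ := (n + m)! * n ! * 2 ^ (n - m) / (m ! * (n - m)!)
  set y : ℝ := n * (n + 1) * δ / (2 * m)
  have hδ₀ : 0 ≤ δ := by linarith [hx.2]
  have hy : 0 ≤ y := by positivity
  have hfactor : (X ^ 2 - 1 : ℝ[X]) ^ n = (X + C (-1)) ^ n * (X + C 1) ^ n := by
    rw [← mul_pow]
    congr 1
    simp only [map_neg, map_one]
    ring
  rw [hfactor, iterate_derivative_mul, eval_finsetSum]
  calc _ ≤ ∑ k ∈ range (m + (n + 1)),
          if m ≤ k then A * (y ^ (k - m) / (k - m)!) else 0 := by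
        rw [show (n + m).succ = m + (n + 1) by omega]
        exact (abs_sum_le_sum_abs _ _).trans
          (sum_le_sum fun k _ => abs_eval_leibniz_term_le hm hx hδ k)
    _ = A * ∑ r ∈ range (n + 1), y ^ r / r ! := by
        rw [sum_range_add, sum_eq_zero fun k hk => if_neg (by simpa using hk), zero_add, mul_sum]
        simp
    _ ≤ A * Real.exp y := by gcongr; exact Real.sum_le_exp_of_nonneg hy _

theorem abs_iteratedDeriv_legendreP_le {n m : ℕ} (hm : 0 < m) (hmn : m ≤ n) {x δ : ℝ}
    (hx : x ∈ Set.Icc (-1) 1) (hδ : 1 - x ≤ δ) :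
    |iteratedDeriv m (legendreP n) x| ≤
      (n + m)! / (2 ^ m * m ! * (n - m)!) * Real.exp (n * (n + 1) * δ / (2 * m)) := by
  rw [iteratedDeriv_legendreP, abs_div, abs_of_pos (by positivity : (0 : ℝ) < 2 ^ n * n !),
    div_le_iff₀ (by positivity)]
  calc _ ≤ (n + m)! * n ! * 2 ^ (n - m) / (m ! * (n - m)!) *
        Real.exp (n * (n + 1) * δ / (2 * m)) :=
        abs_eval_iterate_derivative_sq_sub_one_pow_le hm hx hδ
    _ = _ := by
      rw [show (2 : ℝ) ^ n = 2 ^ (n - m) * 2 ^ m by rw [← pow_add, Nat.sub_add_cancel hmn]]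
      field_simp

noncomputable def assocLegendreTailConst (n m : ℕ) (δ : ℝ) : ℝ :=
  (n + m)! / ((n - m)! * m ! ^ 2 * 2 ^ m) * Real.exp (n * (n + 1) * δ / m)

theorem normalized_sq_assocLegendreP_le {n m : ℕ} (hm : 0 < m) (hmn : m ≤ n) {x δ : ℝ}
    (hx : x ∈ Set.Icc (-1) 1) (hδ : 1 - x ≤ δ) :
    (n - m)! / (n + m)! * assocLegendreP n m x ^ 2 ≤
      assocLegendreTailConst n m δ * (1 - x) ^ m := by
  obtain ⟨hx₀, hx₁⟩ := hx
  have h1x2 : 0 ≤ 1 - x ^ 2 := by nlinarith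
  have hrpow : ((1 - x ^ 2) ^ ((m : ℝ) / 2)) ^ 2 = (1 - x ^ 2) ^ m := by
    rw [← Real.rpow_natCast _ 2, ← Real.rpow_mul h1x2, ← Real.rpow_natCast]
    norm_num
  have hexp : Real.exp (n * (n + 1) * δ / (2 * m)) ^ 2 = Real.exp (n * (n + 1) * δ / m) := by
    rw [sq, ← Real.exp_add, mul_comm 2 (m : ℝ), ← div_div, add_halves]
  calc (n - m)! / (n + m)! * assocLegendreP n m x ^ 2
      = (n - m)! / (n + m)! * ((1 - x ^ 2) ^ m * |iteratedDeriv m (legendreP n) x| ^ 2) := by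
        rw [assocLegendreP, mul_pow, hrpow, sq_abs]
    _ ≤ (n - m)! / (n + m)! * ((2 * (1 - x)) ^ m *
        ((n + m)! / (2 ^ m * m ! * (n - m)!) * Real.exp (n * (n + 1) * δ / (2 * m))) ^ 2) := by
        gcongr
        · nlinarith
        · exact abs_iteratedDeriv_legendreP_le hm hmn ⟨hx₀, hx₁⟩ hδ
    _ = assocLegendreTailConst n m δ * (1 - x) ^ m := by
        rw [assocLegendreTailConst, mul_pow, mul_pow, hexp]
        field_simp

theorem normalized_integral_sq_assocLegendreP_le {n m : ℕ} (hm : 0 < m) (hmn : m ≤ n) {z : ℝ}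
    (hz : z ∈ Set.Icc (-1) 1) :
    (n - m)! / (n + m)! * ∫ x in z..1, assocLegendreP n m x ^ 2 ≤
      assocLegendreTailConst n m (1 - z) * ((1 - z) ^ (m + 1) / (m + 1)) := by
  have hpow : ∫ x in z..1, (1 - x) ^ m = (1 - z) ^ (m + 1) / (m + 1) := by
    rw [intervalIntegral.integral_comp_sub_left (fun t => t ^ m), sub_self, integral_pow]
    simp
  rw [← intervalIntegral.integral_const_mul, ← hpow, ← intervalIntegral.integral_const_mul]
  refine intervalIntegral.integral_mono_on hz.2
    ((continuous_const.mul ((continuous_assocLegendreP n m).pow 2)).intervalIntegrable _ _)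
    ((continuous_const.mul ((continuous_const.sub continuous_id).pow m)).intervalIntegrable _ _)
    fun x hx => ?_
  exact normalized_sq_assocLegendreP_le hm hmn ⟨by linarith [hz.1, hx.1], hx.2⟩
    (by linarith [hx.1])

theorem pow_mul_exp_div_le_two_pow_mul_factorial_sq {m : ℕ} (hm : 0 < m) {u : ℝ}
    (hu₀ : 0 ≤ u) (hu : u ≤ 5 / 27 * m ^ 2) :
    u ^ m * Real.exp (u / m) ≤ 2 ^ m * (m ! : ℝ) ^ 2 := by
  have hexp : Real.exp (u / m) ≤ Real.exp (5 / 27) ^ m := by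
    rw [← Real.exp_nat_mul, Real.exp_le_exp, div_le_iff₀ (by positivity)]
    nlinarith
  have hstirling : (m : ℝ) ^ m ≤ m ! * Real.exp 1 ^ m := by
    have := Real.pow_div_factorial_le_exp (x := m) (by positivity) m
    rwa [div_le_iff₀ (by positivity), ← Real.exp_one_pow, mul_comm] at this
  have hbase : 5 / 27 * Real.exp (5 / 27) * Real.exp 1 ^ 2 ≤ 2 := by
    have h₁ := Real.exp_bound_div_one_sub_of_interval (x := 5 / 27) (by norm_num) (by norm_num)
    have h₂ := Real.exp_one_lt_d9
    have : Real.exp 1 ^ 2 ≤ 7.39 := by nlinarith [Real.exp_pos 1]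
    nlinarith [Real.exp_pos (5 / 27)]
  calc u ^ m * Real.exp (u / m) ≤ (5 / 27 * m ^ 2) ^ m * Real.exp (5 / 27) ^ m := by gcongr
    _ = (5 / 27) ^ m * ((m : ℝ) ^ m) ^ 2 * Real.exp (5 / 27) ^ m := by ring
    _ ≤ (5 / 27) ^ m * (m ! * Real.exp 1 ^ m) ^ 2 * Real.exp (5 / 27) ^ m := by gcongr
    _ = (5 / 27 * Real.exp (5 / 27) * Real.exp 1 ^ 2) ^ m * (m ! : ℝ) ^ 2 := by ring
    _ ≤ 2 ^ m * (m ! : ℝ) ^ 2 := by gcongr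

theorem assocLegendreTailConst_mul_pow_le_one {n m : ℕ} (hm : 0 < m) (hmn : m ≤ n) {δ : ℝ}
    (hδ₀ : 0 ≤ δ) (hδ : n * (n + 1) * δ ≤ 5 / 27 * m ^ 2) :
    assocLegendreTailConst n m δ * δ ^ m ≤ 1 := by
  have hfac : ((n + m)! : ℝ) ≤ (n - m)! * (n * (n + 1)) ^ m := by
    exact_mod_cast factorial_add_le_factorial_sub_mul_pow hmn
  rw [assocLegendreTailConst, div_mul_eq_mul_div, div_mul_eq_mul_div, div_le_one (by positivity)]
  calc (n + m)! * Real.exp (n * (n + 1) * δ / m) * δ ^ m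
      ≤ (n - m)! * (n * (n + 1)) ^ m * Real.exp (n * (n + 1) * δ / m) * δ ^ m := by gcongr
    _ = (n - m)! * ((n * (n + 1) * δ) ^ m * Real.exp (n * (n + 1) * δ / m)) := by
        rw [mul_pow (_ * _)]
        ring
    _ ≤ (n - m)! * (2 ^ m * m ! ^ 2) := mul_le_mul_of_nonneg_left
        (pow_mul_exp_div_le_two_pow_mul_factorial_sq hm (by positivity) hδ) (by positivity)
    _ = (n - m)! * m ! ^ 2 * 2 ^ m := by ring

theorem mul_one_sub_le_of_xTwo_le {n m : ℕ} (hm : 0 < m) (hmn : m ≤ n) {z : ℝ}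
    (hz : xTwo n m ≤ z) :
    n * (n + 1) * (1 - z) ≤ 5 / 27 * m ^ 2 := by
  have hn : (0 : ℝ) < n := by exact_mod_cast hm.trans_le hmn
  have hN : (0 : ℝ) < n * (n + 1) := by positivity
  have hmn' : (m : ℝ) ≤ n := by exact_mod_cast hmn
  set q : ℝ := m ^ 2 / (3 * n * (n + 1))
  have hqN : q * (n * (n + 1)) = m ^ 2 / 3 := by
    simp only [q]
    field_simp
  have hq : q ≤ 1 / 3 := by nlinarith
  have hx₂ : xTwo n m ^ 2 = 1 - q := Real.sq_sqrt (by linarith)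
  have hx₂₀ : 0 ≤ xTwo n m := Real.sqrt_nonneg _
  have hz₀ : 4 / 5 ≤ z := by nlinarith
  have hzq : (1 - z) * (9 / 5) ≤ q := by
    have hz₂ : xTwo n m ^ 2 ≤ z ^ 2 := pow_le_pow_left₀ hx₂₀ hz 2
    rcases le_or_gt z 1 with hz₁ | hz₁
    · nlinarith
    · have : 0 ≤ q := by positivity
      nlinarith
  nlinarith

theorem div_add_one_le_sqrt_div {n m : ℕ} (hn : 0 < n) {δ : ℝ} (hδ₀ : 0 ≤ δ)
    (hδ : n * (n + 1) * δ ≤ 5 / 27 * m ^ 2) :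
    δ / (m + 1) ≤ Real.sqrt δ / n := by
  have hn' : (0 : ℝ) < n := by exact_mod_cast hn
  have hsq := Real.sq_sqrt hδ₀
  have hs₀ := Real.sqrt_nonneg δ
  have hsqrt : Real.sqrt δ * n ≤ m + 1 := by
    have hδn : (Real.sqrt δ * n) ^ 2 ≤ n * (n + 1) * δ := by
      rw [mul_pow, hsq]
      nlinarith
    by_contra! h
    nlinarith [mul_self_lt_mul_self (by positivity) h]
  rw [div_le_div_iff₀ (by positivity) hn']
  nlinarith

/-- `L²` tail bound beyond `x₂`: there is an absolute constant
`C > 0` such that for `1 ≤ m ≤ n` and `z ∈ [x₂, 1]`,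
`((n−m)!/(n+m)!) ∫_z^1 P_n^m(x)² dx ≤ C √(1−z)/n`. -/
theorem stmt16 :
    ∃ C > (0 : ℝ), ∀ n m : ℕ, 1 ≤ m → m ≤ n → ∀ z ∈ Set.Icc (xTwo n m) 1,
      (((n - m).factorial : ℝ) / ((n + m).factorial : ℝ)) *
          (∫ x in z..1, (assocLegendreP n m x) ^ 2)
        ≤ C * Real.sqrt (1 - z) / (n : ℝ) := by
  refine ⟨1, one_pos, fun n m hm hmn z hz => ?_⟩
  have hδ : n * (n + 1) * (1 - z) ≤ 5 / 27 * m ^ 2 := mul_one_sub_le_of_xTwo_le hm hmn hz.1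
  have hδ₀ : 0 ≤ 1 - z := by linarith [hz.2]
  have hz' : z ∈ Set.Icc (-1) 1 := ⟨by linarith [(Real.sqrt_nonneg _).trans hz.1], hz.2⟩
  calc _ ≤ assocLegendreTailConst n m (1 - z) * ((1 - z) ^ (m + 1) / (m + 1)) :=
        normalized_integral_sq_assocLegendreP_le hm hmn hz'
    _ = assocLegendreTailConst n m (1 - z) * (1 - z) ^ m * ((1 - z) / (m + 1)) := by ring
    _ ≤ 1 * ((1 - z) / (m + 1)) := by
        gcongr
        exact assocLegendreTailConst_mul_pow_le_one hm hmn hδ₀ hδ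
    _ ≤ 1 * Real.sqrt (1 - z) / n := by
        rw [one_mul, one_mul]
        exact div_add_one_le_sqrt_div (by omega) hδ₀ hδ
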